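/- arXiv:1011.4232 — 3 statements merged into one kernel-verified Lean document; each statement's English description precedes it below -/
import Mathlib

section
/- Let g(z) = z⁴ + b₃z³ + b₂z² + b₁z + b₀ be a monic complex quartic. There exists a monic quadratic f(z) = z² + a₁z + a₀ with f ∘ f = g if and only if b₀ = (1/64)(b₃⁴ − 8b₂b₃² − 12b₃² + 16b₂² + 32b₂ − 16b₃) and b₁ = −(1/8)(b₃³ − 4b₂b₃). -/
open Polynomial

lemma comp_expand (a₁ a₀ : ℂ) :
    (X ^ 2 + C a₁ * X + C a₀).comp (X ^ 2 + C a₁ * X + C a₀) =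
      X ^ 4 + C (2 * a₁) * X ^ 3 + C (a₁ ^ 2 + 2 * a₀ + a₁) * X ^ 2 +
        C (2 * a₁ * a₀ + a₁ ^ 2) * X + C (a₀ ^ 2 + a₁ * a₀ + a₀) := by
  simp only [add_comp, mul_comp, X_comp, C_comp, pow_comp, map_add, map_mul, map_pow,
    map_ofNat]
  ring

theorem quartic_has_monic_quadratic_iterative_root_iff (b₃ b₂ b₁ b₀ : ℂ) :
    (∃ a₁ a₀ : ℂ,
        (X ^ 2 + C a₁ * X + C a₀).comp (X ^ 2 + C a₁ * X + C a₀) =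
          X ^ 4 + C b₃ * X ^ 3 + C b₂ * X ^ 2 + C b₁ * X + C b₀) ↔
      b₀ = (1 / 64) * (b₃ ^ 4 - 8 * b₂ * b₃ ^ 2 - 12 * b₃ ^ 2 + 16 * b₂ ^ 2
              + 32 * b₂ - 16 * b₃) ∧
        b₁ = -(1 / 8) * (b₃ ^ 3 - 4 * b₂ * b₃) := by
  constructor
  · rintro ⟨a₁, a₀, h⟩
    rw [comp_expand] at h
    have key := Polynomial.ext_iff.mp h
    have e3 := key 3
    have e2 := key 2
    have e1 := key 1
    have e0 := key 0
    simp only [coeff_add, coeff_C_mul, coeff_X_pow, coeff_C, coeff_X, coeff_X_pow] at e3 e2 e1 e0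
    norm_num at e3 e2 e1 e0
    subst e3 e2 e1 e0
    constructor <;> ring
  · rintro ⟨hb₀, hb₁⟩
    refine ⟨b₃ / 2, (4 * b₂ - b₃ ^ 2 - 2 * b₃) / 8, ?_⟩
    rw [comp_expand,
      show 2 * (b₃ / 2) = b₃ by ring,
      show (b₃ / 2) ^ 2 + 2 * ((4 * b₂ - b₃ ^ 2 - 2 * b₃) / 8) + b₃ / 2 = b₂ by ring,
      show b₃ * ((4 * b₂ - b₃ ^ 2 - 2 * b₃) / 8) + (b₃ / 2) ^ 2 = b₁ by
        rw [hb₁]; ring,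
      show ((4 * b₂ - b₃ ^ 2 - 2 * b₃) / 8) ^ 2 + b₃ / 2 * ((4 * b₂ - b₃ ^ 2 - 2 * b₃) / 8) +
          (4 * b₂ - b₃ ^ 2 - 2 * b₃) / 8 = b₀ by rw [hb₀]; ring]
end

section
/- A monic quartic polynomial g has at most one monic quadratic iterative square root: if f₁, f₂ are monic quadratics with f₁ ∘ f₁ = f₂ ∘ f₂ = g, then f₁ = f₂. -/
open Polynomial

lemma key (p q : ℂ) : (X ^ 2 + C p * X + C q).comp (X ^ 2 + C p * X + C q) =
    X ^ 4 + C (2 * p) * X ^ 3 + C (p ^ 2 + p + 2 * q) * X ^ 2 +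
      C (2 * p * q + p ^ 2) * X + C (q ^ 2 + p * q + q) := by
  simp only [add_comp, mul_comp, pow_comp, X_comp, C_comp, C_add, C_mul, C_pow, map_ofNat]
  ring

theorem monic_quadratic_iterative_root_unique (b₃ b₂ b₁ b₀ a₁ a₀ c₁ c₀ : ℂ)
    (h₁ : (X ^ 2 + C a₁ * X + C a₀).comp (X ^ 2 + C a₁ * X + C a₀) =
        X ^ 4 + C b₃ * X ^ 3 + C b₂ * X ^ 2 + C b₁ * X + C b₀)
    (h₂ : (X ^ 2 + C c₁ * X + C c₀).comp (X ^ 2 + C c₁ * X + C c₀) =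
        X ^ 4 + C b₃ * X ^ 3 + C b₂ * X ^ 2 + C b₁ * X + C b₀) :
    X ^ 2 + C a₁ * X + C a₀ = X ^ 2 + C c₁ * X + C c₀ := by
  have e := (key a₁ a₀).symm.trans (h₁.trans (h₂.symm.trans (key c₁ c₀)))
  have h3 := congrArg (fun pp => pp.coeff 3) e
  have hh2 := congrArg (fun pp => pp.coeff 2) e
  simp only [coeff_add, coeff_C_mul, coeff_X_pow, coeff_C, coeff_X] at h3 hh2
  norm_num at h3 hh2
  have e1 : a₁ = c₁ := by exact h3
  have e0 : a₀ = c₀ := by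
    subst e1
    linear_combination hh2 / 2
  rw [e1, e0]
end

section
/- Let α be a primitive cube root of unity and β ∈ ℂ. Define g(z) = z⁴ + βz³ + (3/8)β²z² + (1/16)β³z + (1/256)β⁴ − (1/4)β. Then the three distinct polynomials f₁(z) = z² + (β/2)z − (1/16)β(βα² + βα + 4), f_α(z) = αz² + (βα/2)z − (1/16)β(β + βα² + 4), and f_{α²}(z) = α²z² + (βα²/2)z − (1/16)β(β + βα + 4) each satisfy f ∘ f = g. -/
open Polynomial

theorem three_iterative_roots (α β : ℂ) (hα3 : α ^ 3 = 1) (hα1 : α ≠ 1) :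
    let g : Polynomial ℂ := X ^ 4 + C β * X ^ 3 + C ((3 / 8) * β ^ 2) * X ^ 2 +
      C ((1 / 16) * β ^ 3) * X + C ((1 / 256) * β ^ 4 - (1 / 4) * β)
    let f₁ : Polynomial ℂ := X ^ 2 + C (β / 2) * X +
      C (-(1 / 16) * β * (β * α ^ 2 + β * α + 4))
    let fα : Polynomial ℂ := C α * X ^ 2 + C (β * α / 2) * X +
      C (-(1 / 16) * β * (β + β * α ^ 2 + 4))
    let fα2 : Polynomial ℂ := C (α ^ 2) * X ^ 2 + C (β * α ^ 2 / 2) * X +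
      C (-(1 / 16) * β * (β + β * α + 4))
    f₁ ≠ fα ∧ f₁ ≠ fα2 ∧ fα ≠ fα2 ∧
      f₁.comp f₁ = g ∧ fα.comp fα = g ∧ fα2.comp fα2 = g := by
  intro g f₁ fα fα2
  have h : α ^ 2 + α + 1 = 0 := by
    have h0 : (α - 1) * (α ^ 2 + α + 1) = 0 := by linear_combination hα3
    rcases mul_eq_zero.mp h0 with h' | h'
    · exact absurd (sub_eq_zero.mp h') hα1
    · exact h'
  have hα2 : α ^ 2 ≠ 1 := by
    intro h2
    exact hα1 (by linear_combination hα3 - α * h2)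
  have hαα2 : α ≠ α ^ 2 := by
    intro h2
    exact hα1 (by linear_combination h2 + α * h2 + hα3)
  refine ⟨?_, ?_, ?_, ?_, ?_, ?_⟩
  · intro hh
    have := congrArg (fun p => Polynomial.coeff p 2) hh
    simp only [f₁, fα, coeff_add, coeff_C_mul, coeff_X_pow, coeff_X, coeff_C] at this
    norm_num at this
    exact hα1 this.symm
  · intro hh
    have := congrArg (fun p => Polynomial.coeff p 2) hh
    simp only [f₁, fα2, coeff_add, coeff_C_mul, coeff_X_pow, coeff_X, coeff_C] at this
    norm_num at this
    exact hα2 this.symm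
  · intro hh
    have := congrArg (fun p => Polynomial.coeff p 2) hh
    simp only [fα, fα2, coeff_add, coeff_C_mul, coeff_X_pow, coeff_X, coeff_C] at this
    norm_num at this
    exact hαα2 this
  · apply Polynomial.funext
    intro x
    simp only [f₁, g, eval_comp, eval_add, eval_mul, eval_pow, eval_X, eval_C]
    ring_nf
    linear_combination ((-1/16)*β^2 + (-1/8)*β^2*x^2 + (-1/16)*β^3*x + (-1/256)*β^4
      + (1/256)*α*β^4 + (1/256)*α^2*β^4) * h
  · apply Polynomial.funext
    intro x
    simp only [fα, g, eval_comp, eval_add, eval_mul, eval_pow, eval_X, eval_C]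
    ring_nf
    linear_combination ((-1)*x^4 + (-1)*β*x^3 + (-1/16)*β^2 + (-3/8)*β^2*x^2
      + (-1/16)*β^3*x + (-1/256)*β^4 + α*x^4 + α*β*x^3 + (3/8)*α*β^2*x^2
      + (1/16)*α*β^3*x + (1/128)*α*β^4 + (-1/8)*α^2*β^2*x^2 + (-1/16)*α^2*β^3*x
      + (-1/256)*α^2*β^4 + (1/256)*α^3*β^4) * h
  · apply Polynomial.funext
    intro x
    simp only [fα2, g, eval_comp, eval_add, eval_mul, eval_pow, eval_X, eval_C]
    ring_nf
    linear_combination ((-1)*x^4 + (-1)*β*x^3 + (-1/16)*β^2 + (-3/8)*β^2*x^2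
      + (-1/16)*β^3*x + (-1/256)*β^4 + α*x^4 + α*β*x^3 + (3/8)*α*β^2*x^2
      + (1/16)*α*β^3*x + (1/256)*α*β^4 + (1/256)*α^2*β^4 + (-1)*α^3*x^4
      + (-1)*α^3*β*x^3 + (-3/8)*α^3*β^2*x^2 + (-1/16)*α^3*β^3*x + α^4*x^4
      + α^4*β*x^3 + (1/4)*α^4*β^2*x^2) * h
end
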